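/- Let n ≥ 1, X > 0, T_s > 0, L > 0, Ψ ≥ 0, φ̃ > 0, and let Y : Fin n → ℝ and γ : Fin n → ℝ with γ_i > 0 for all i. For each i let P_i be the unique P > 0 satisfying log(1+P·γ_i) = 1 + (φ̃·γ_i − 1)/(1+P·γ_i), and set μ_i = L/log(1+P_i·γ_i). For a subset S ⊆ Fin n define G(S) = ∑_{i∈S}(Y_i − (X/T_s)·P_i·μ_i) + Ψ·(T_s − ∑_{i∈S} μ_i). If there exist i ∉ S and j ∈ S with Y_i > Y_j and γ_i > γ_j, then G((S \ {j}) ∪ {i}) > G(S), so S does not maximize G. -/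

import Mathlib

/-!
Write `t = 1 + Pγ` for a user at its Lambert power. The power equation says exactly
`klFun t = φγ`, where `klFun t = t log t + 1 - t` is strictly increasing on `[1, ∞)`, so a
better channel gives a larger `t`, hence a shorter transmission time `μ = L / log t`. The energy
`Pμ = Lφ (t - 1) / (klFun t · log t)` also decreases in `t`: by strict convexity of `klFun` and
`klFun 1 = 0`, the secant slope `klFun t / (t - 1)` increases, as does `log t`. Swapping in the
dominating user therefore raises the queue reward, lowers the energy cost and frees slot time.
-/

open Real InformationTheory Set

lemma klFun_pos {x : ℝ} (hx : 0 ≤ x) (hx1 : x ≠ 1) : 0 < klFun x :=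
  (klFun_nonneg hx).lt_of_ne' fun h => hx1 ((klFun_eq_zero_iff hx).1 h)

lemma strictMonoOn_klFun : StrictMonoOn klFun (Ici 1) := by
  refine strictMonoOn_of_deriv_pos (convex_Ici 1) continuous_klFun.continuousOn fun x hx => ?_
  rw [interior_Ici] at hx
  rw [deriv_klFun]
  exact log_pos hx

lemma strictMonoOn_klFun_div_sub_one : StrictMonoOn (fun x => klFun x / (x - 1)) (Ioi 1) := by
  intro x (hx : 1 < x) y (hy : 1 < y) hxy
  have hsecant := strictConvexOn_klFun.secant_strict_mono (a := 1) (mem_Ici.2 zero_le_one)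
    (mem_Ici.2 (by linarith)) (mem_Ici.2 (by linarith)) hx.ne' hy.ne' hxy
  simpa only [klFun_one, sub_zero] using hsecant

lemma klFun_eq_of_log_eq {t c : ℝ} (ht : t ≠ 0) (h : log t = 1 + (c - 1) / t) :
    klFun t = c := by
  rw [klFun_apply, h]
  field_simp
  ring

noncomputable def lambertEnergy (t : ℝ) : ℝ := (t - 1) / (klFun t * log t)

lemma strictAntiOn_lambertEnergy : StrictAntiOn lambertEnergy (Ioi 1) := by
  intro x hx y hy hxy
  have hslope_pos : 0 < klFun x / (x - 1) :=
    div_pos (klFun_pos (zero_le_one.trans hx.le) hx.ne') (sub_pos.2 hx)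
  have hinv : ∀ z ∈ Ioi (1 : ℝ), lambertEnergy z = (klFun z / (z - 1) * log z)⁻¹ := by
    intro z hz
    have hz1 : z - 1 ≠ 0 := sub_ne_zero.2 (ne_of_gt hz)
    rw [lambertEnergy]
    field_simp
  rw [hinv x hx, hinv y hy]
  exact inv_strictAnti₀ (mul_pos hslope_pos (log_pos hx))
    (mul_lt_mul'' (strictMonoOn_klFun_div_sub_one hx hy hxy)
      (log_lt_log (zero_lt_one.trans hx) hxy) hslope_pos.le (log_pos hx).le)

lemma mul_div_log_eq_lambertEnergy {P γ φ L : ℝ} (hγ : γ ≠ 0) (hφ : φ ≠ 0)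
    (h : klFun (1 + P * γ) = φ * γ) :
    P * (L / log (1 + P * γ)) = L * φ * lambertEnergy (1 + P * γ) := by
  rw [lambertEnergy, h, add_sub_cancel_left]
  field_simp

lemma Finset.sum_insert_erase_of_notMem {ι M : Type*} [DecidableEq ι] [AddCommGroup M]
    {s : Finset ι} {i j : ι} (hi : i ∉ s) (hj : j ∈ s) (f : ι → M) :
    ∑ k ∈ insert i (s.erase j), f k = ∑ k ∈ s, f k + f i - f j := by
  rw [Finset.sum_insert fun h => hi (Finset.mem_of_mem_erase h), ← Finset.sum_erase_add s f hj]
  abel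

theorem dominated_user_swap_improves_general
    (n : ℕ) (X Ts L Ψ φ : ℝ)
    (hX : 0 < X) (hTs : 0 < Ts) (hL : 0 < L) (hΨ : 0 ≤ Ψ) (hφ : 0 < φ)
    (Y γ : Fin n → ℝ) (hγ : ∀ i, 0 < γ i)
    (P : Fin n → ℝ)
    (hP_pos : ∀ i, 0 < P i)
    (hP_eq : ∀ i, Real.log (1 + P i * γ i) =
      1 + (φ * γ i - 1) / (1 + P i * γ i))
    (μ : Fin n → ℝ) (hμ : ∀ i, μ i = L / Real.log (1 + P i * γ i))
    (G : Finset (Fin n) → ℝ)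
    (hG : ∀ S : Finset (Fin n), G S =
      (∑ i ∈ S, (Y i - (X / Ts) * P i * μ i)) + Ψ * (Ts - ∑ i ∈ S, μ i))
    (S : Finset (Fin n)) (i j : Fin n)
    (hiS : i ∉ S) (hjS : j ∈ S) (hY : Y j < Y i) (hγij : γ j < γ i) :
    G S < G (insert i (S.erase j)) ∧ ¬ (∀ S' : Finset (Fin n), G S' ≤ G S) := by
  have ht : ∀ k, 1 < 1 + P k * γ k := fun k => by linarith [mul_pos (hP_pos k) (hγ k)]
  have hklFun : ∀ k, klFun (1 + P k * γ k) = φ * γ k := fun k =>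
    klFun_eq_of_log_eq (by linarith [ht k]) (hP_eq k)
  have htij : 1 + P j * γ j < 1 + P i * γ i := by
    rw [← strictMonoOn_klFun.lt_iff_lt (ht j).le (ht i).le, hklFun, hklFun]
    exact mul_lt_mul_of_pos_left hγij hφ
  have hμij : μ i < μ j := by
    rw [hμ, hμ]
    exact div_lt_div_of_pos_left hL (log_pos (ht j)) (log_lt_log (by linarith [ht j]) htij)
  have henergy : P i * μ i < P j * μ j := by
    rw [hμ, hμ, mul_div_log_eq_lambertEnergy (hγ i).ne' hφ.ne' (hklFun i),
      mul_div_log_eq_lambertEnergy (hγ j).ne' hφ.ne' (hklFun j)]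
    exact mul_lt_mul_of_pos_left (strictAntiOn_lambertEnergy (ht j) (ht i) htij) (mul_pos hL hφ)
  have hswap : G S < G (insert i (S.erase j)) := by
    rw [hG, hG, Finset.sum_insert_erase_of_notMem hiS hjS,
      Finset.sum_insert_erase_of_notMem hiS hjS]
    have hcost := mul_lt_mul_of_pos_left henergy (div_pos hX hTs)
    have hslot := mul_le_mul_of_nonneg_left hμij.le hΨ
    linarith
  exact ⟨hswap, fun hmax => hswap.not_ge (hmax _)⟩

theorem dominated_user_swap_improves
    (n : ℕ) (hn : 1 ≤ n) (X Ts L Ψ φ : ℝ)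
    (hX : 0 < X) (hTs : 0 < Ts) (hL : 0 < L) (hΨ : 0 ≤ Ψ) (hφ : 0 < φ)
    (Y γ : Fin n → ℝ) (hγ : ∀ i, 0 < γ i)
    (P : Fin n → ℝ)
    (hP_pos : ∀ i, 0 < P i)
    (hP_eq : ∀ i, Real.log (1 + P i * γ i) =
      1 + (φ * γ i - 1) / (1 + P i * γ i))
    (hP_unique : ∀ i, ∀ Q : ℝ, 0 < Q →
      Real.log (1 + Q * γ i) = 1 + (φ * γ i - 1) / (1 + Q * γ i) → Q = P i)
    (μ : Fin n → ℝ) (hμ : ∀ i, μ i = L / Real.log (1 + P i * γ i))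
    (G : Finset (Fin n) → ℝ)
    (hG : ∀ S : Finset (Fin n), G S =
      (∑ i ∈ S, (Y i - (X / Ts) * P i * μ i)) + Ψ * (Ts - ∑ i ∈ S, μ i))
    (S : Finset (Fin n)) (i j : Fin n)
    (hiS : i ∉ S) (hjS : j ∈ S) (hY : Y j < Y i) (hγij : γ j < γ i) :
    G S < G (insert i (S.erase j)) ∧ ¬ (∀ S' : Finset (Fin n), G S' ≤ G S) :=
  dominated_user_swap_improves_general n X Ts L Ψ φ hX hTs hL hΨ hφ Y γ hγ P hP_pos hP_eq μ hμ G hG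
    S i j hiS hjS hY hγij
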